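/- arXiv:1103.0319 — 2 statements merged into one kernel-verified Lean document; each statement's English description precedes it below -/
import Mathlib

section
/- Lemma: Let P be a rook placement on a rectangular Ferrers board, let S = S₁…S_k be a decreasing sequence of length k in P, and let X ∈ P be such that S₁ X is a 12-pattern. If κ(X) < col(S₁), then there exists a decreasing sequence D of length k+1 in P with first element D₁ = X. -/
open scoped Classical

/-- A cell (square) of the grid: `(column, row)`, both `≥ 1` for genuine cells. -/
abbrev Cell : Type := ℕ × ℕ

/-- The rectangle `R(a,b)` consisting of all cells `(i,j)` with `1 ≤ i ≤ a`, `1 ≤ j ≤ b`. -/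
def Rect (a b : ℕ) : Finset Cell := Finset.Icc 1 a ×ˢ Finset.Icc 1 b

/-- A Ferrers board (French notation): a down-left closed finite set of cells with
positive coordinates. -/
def IsFerrers (F : Finset Cell) : Prop :=
  ∀ p ∈ F, 1 ≤ p.1 ∧ 1 ≤ p.2 ∧
    ∀ q : Cell, 1 ≤ q.1 → 1 ≤ q.2 → q.1 ≤ p.1 → q.2 ≤ p.2 → q ∈ F

/-- A rook placement on a board `F`: a subset of `F` with at most one cell in each
column and at most one cell in each row. -/
def IsPlacement (F P : Finset Cell) : Prop :=
  P ⊆ F ∧ (∀ p ∈ P, ∀ q ∈ P, p.1 = q.1 → p = q) ∧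
    (∀ p ∈ P, ∀ q ∈ P, p.2 = q.2 → p = q)

/-- A decreasing sequence in `P`: columns strictly increase, rows strictly decrease. -/
def IsDecSeq (P : Finset Cell) (k : ℕ) (S : Fin k → Cell) : Prop :=
  (∀ i, S i ∈ P) ∧ ∀ i j : Fin k, i < j → (S i).1 < (S j).1 ∧ (S j).2 < (S i).2

/-- An increasing sequence in `P`: columns and rows both strictly increase. -/
def IsIncSeq (P : Finset Cell) (k : ℕ) (S : Fin k → Cell) : Prop :=
  (∀ i, S i ∈ P) ∧ ∀ i j : Fin k, i < j → (S i).1 < (S j).1 ∧ (S i).2 < (S j).2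

/-- Lexicographic comparison of two sequences of cells by their rows (values),
entry by entry from the left. -/
def rowLexLE (k : ℕ) (S T : Fin k → Cell) : Prop :=
  (∀ i, (S i).2 = (T i).2) ∨
    ∃ i : Fin k, (S i).2 < (T i).2 ∧ ∀ j : Fin k, j < i → (S j).2 = (T j).2

/-- The condition for a left pivot in row `r`, column `c`, given the placement `P` and
the set `prev` of pivots already placed (in rows below `r`): the element of `P` in row
`r` has `c` strictly to its left, column `c` contains an element of `P` below row `r`,
and column `c` contains no pivot yet. -/
def pivCondL (P prev : Finset Cell) (r c : ℕ) : Prop :=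
  (∃ x ∈ P, x.2 = r ∧ c < x.1) ∧ (∃ y ∈ P, y.1 = c ∧ y.2 < r) ∧ ∀ v ∈ prev, v.1 ≠ c

/-- The condition for a right pivot in row `r`, column `c`. -/
def pivCondR (P prev : Finset Cell) (r c : ℕ) : Prop :=
  (∃ x ∈ P, x.2 = r ∧ x.1 < c) ∧ (∃ y ∈ P, y.1 = c ∧ y.2 < r) ∧ ∀ v ∈ prev, v.1 ≠ c

/-- The left pivots among rows `1,…,r`, built row by row from the bottom: no pivot in
the bottom row; in row `r ≥ 2`, if an admissible column exists, the pivot goes in the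
rightmost one. -/
noncomputable def pivLAux (P : Finset Cell) : ℕ → Finset Cell
  | 0 => ∅
  | r + 1 =>
    let prev := pivLAux P r
    if r = 0 then prev
    else if ∃ c, pivCondL P prev (r + 1) c then
      insert (sSup {c | pivCondL P prev (r + 1) c}, r + 1) prev
    else prev

/-- The right pivots among rows `1,…,r`: in row `r ≥ 2`, the pivot goes in the leftmost
admissible column. -/
noncomputable def pivRAux (P : Finset Cell) : ℕ → Finset Cell
  | 0 => ∅
  | r + 1 =>
    let prev := pivRAux P r
    if r = 0 then prev
    else if ∃ c, pivCondR P prev (r + 1) c then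
      insert (sInf {c | pivCondR P prev (r + 1) c}, r + 1) prev
    else prev

/-- The left pivots `pivL(P)` of a placement `P` on a board with `n` rows. -/
noncomputable def pivL (n : ℕ) (P : Finset Cell) : Finset Cell := pivLAux P n

/-- The right pivots `pivR(P)` of a placement `P` on a board with `n` rows. -/
noncomputable def pivR (n : ℕ) (P : Finset Cell) : Finset Cell := pivRAux P n

/-- `ρ(X)`: the row of the (left) pivot in the column of `X`, or `∞` if there is none. -/
noncomputable def rho (n : ℕ) (P : Finset Cell) (X : Cell) : ℕ∞ :=
  if ∃ r, (X.1, r) ∈ pivL n P then ((sSup {r | (X.1, r) ∈ pivL n P} : ℕ) : ℕ∞) else ⊤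

/-- `κ(X)`: the column of the (left) pivot in the row of `X`, or `0` if there is none. -/
noncomputable def kappa (n : ℕ) (P : Finset Cell) (X : Cell) : ℕ :=
  sSup {c | (c, X.2) ∈ pivL n P}

/-- A pivot-path: an increasing subsequence `I` of `P` such that each consecutive pair
creates a pivot, i.e. `ρ(I_i) = row(I_{i+1})` for all `i`. -/
def IsPivotPath (n : ℕ) (P : Finset Cell) (m : ℕ) (I : Fin m → Cell) : Prop :=
  IsIncSeq P m I ∧ ∀ (i : Fin m) (h : i.1 + 1 < m),
    rho n P (I i) = ((I ⟨i.1 + 1, h⟩).2 : ℕ∞)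


lemma pivLAux_zero (P : Finset Cell) : pivLAux P 0 = ∅ := rfl

lemma pivLAux_succ (P : Finset Cell) (r : ℕ) :
    pivLAux P (r+1) =
      if r = 0 then pivLAux P r
      else if ∃ c, pivCondL P (pivLAux P r) (r + 1) c then
        insert (sSup {c | pivCondL P (pivLAux P r) (r + 1) c}, r + 1) (pivLAux P r)
      else pivLAux P r := rfl

lemma pivLAux_row_le (P : Finset Cell) :
    ∀ r, ∀ q ∈ pivLAux P r, 2 ≤ q.2 ∧ q.2 ≤ r := by
  intro r
  induction r with
  | zero => simp [pivLAux_zero]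
  | succ r ih =>
    intro q hq
    rw [pivLAux_succ] at hq
    split_ifs at hq with h0 hex
    · have := ih q hq; omega
    · rcases Finset.mem_insert.1 hq with rfl | hq'
      · simp; omega
      · have := ih q hq'; omega
    · have := ih q hq; omega

lemma pivLAux_mono (P : Finset Cell) : ∀ {r s : ℕ}, r ≤ s → pivLAux P r ⊆ pivLAux P s := by
  intro r s h
  induction s with
  | zero => have : r = 0 := by omega
            subst this; exact subset_rfl
  | succ s ih =>
    rcases Nat.eq_or_lt_of_le h with rfl | h'
    · exact subset_rfl
    · have hsub : pivLAux P r ⊆ pivLAux P s := ih (by omega)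
      rw [pivLAux_succ]
      split_ifs with h0 hex
      · exact hsub
      · exact hsub.trans (Finset.subset_insert _ _)
      · exact hsub

lemma pivLAux_row_unique (P : Finset Cell) :
    ∀ s, ∀ q ∈ pivLAux P s, ∀ q' ∈ pivLAux P s, q.2 = q'.2 → q = q' := by
  intro s
  induction s with
  | zero => simp [pivLAux_zero]
  | succ s ih =>
    intro q hq q' hq' hrow
    rw [pivLAux_succ] at hq hq'
    split_ifs at hq hq' with h0 hex
    · exact ih q hq q' hq' hrow
    · rcases Finset.mem_insert.1 hq with rfl | h1 <;> rcases Finset.mem_insert.1 hq' with h2 | h2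
      · rw [h2]
      · exact absurd hrow (by have := (pivLAux_row_le P s q' h2).2; simp; omega)
      · exact absurd hrow (by have := (pivLAux_row_le P s q h1).2; rw [h2]; simp; omega)
      · exact ih q h1 q' h2 hrow
    · exact ih q hq q' hq' hrow

lemma pivLAux_mem_char (P : Finset Cell) :
    ∀ s, ∀ q ∈ pivLAux P s,
      {c | pivCondL P (pivLAux P (q.2 - 1)) q.2 c}.Nonempty ∧
      q.1 = sSup {c | pivCondL P (pivLAux P (q.2 - 1)) q.2 c} := by
  intro s
  induction s with
  | zero => simp [pivLAux_zero]
  | succ r ih =>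
    intro q hq
    rw [pivLAux_succ] at hq
    split_ifs at hq with h0 hex
    · exact ih q hq
    · rcases Finset.mem_insert.1 hq with rfl | hq'
      · simp only [Nat.add_sub_cancel]
        exact ⟨hex, trivial⟩
      · exact ih q hq'
    · exact ih q hq

lemma bddAbove_pivSet (P prev : Finset Cell) (r : ℕ) :
    BddAbove {c | pivCondL P prev r c} := by
  refine ⟨P.sup Prod.fst, fun c hc => ?_⟩
  obtain ⟨⟨x, hx, -, hcx⟩, -, -⟩ := hc
  exact le_trans hcx.le (Finset.le_sup hx)

lemma pivot_placed (P : Finset Cell) {r c : ℕ} (h2 : 2 ≤ r)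
    (hc : pivCondL P (pivLAux P (r-1)) r c) :
    ∃ c', (c', r) ∈ pivLAux P r ∧ c ≤ c' := by
  obtain ⟨r', rfl⟩ : ∃ r', r = r' + 1 := ⟨r - 1, by omega⟩
  simp only [Nat.add_sub_cancel] at hc
  rw [pivLAux_succ, if_neg (by omega : ¬ r' = 0),
    if_pos (⟨c, hc⟩ : ∃ c0, pivCondL P (pivLAux P r') (r'+1) c0)]
  exact ⟨_, Finset.mem_insert_self _ _, le_csSup (bddAbove_pivSet P _ _) hc⟩

lemma pivot_cond (n : ℕ) (P : Finset Cell) {q : Cell} (h : q ∈ pivL n P) :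
    pivCondL P (pivLAux P (q.2 - 1)) q.2 q.1 := by
  obtain ⟨hne, heq⟩ := pivLAux_mem_char P n q h
  have hbdd := bddAbove_pivSet P (pivLAux P (q.2 - 1)) q.2
  rw [heq]
  exact Nat.sSup_mem hne hbdd

lemma kappa_eq (n : ℕ) (P : Finset Cell) {X : Cell} {c : ℕ} (h : (c, X.2) ∈ pivL n P) :
    kappa n P X = c := by
  have hset : {c' | (c', X.2) ∈ pivL n P} = {c} := by
    ext c'
    simp only [Set.mem_setOf_eq, Set.mem_singleton_iff]
    constructor
    · intro h'
      have := pivLAux_row_unique P n _ h' _ h rfl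
      exact congrArg Prod.fst this
    · rintro rfl; exact h
  rw [kappa, hset, csSup_singleton]

lemma mem_rect {m n : ℕ} {P : Finset Cell} (hP : IsPlacement (Rect m n) P) {X : Cell}
    (hX : X ∈ P) : 1 ≤ X.1 ∧ X.1 ≤ m ∧ 1 ≤ X.2 ∧ X.2 ≤ n := by
  have := hP.1 hX
  simp only [Rect, Finset.mem_product, Finset.mem_Icc] at this
  tauto

lemma decseq_le {P : Finset Cell} {k : ℕ} {E : Fin k → Cell} (hE : IsDecSeq P k E)
    {i j : Fin k} (h : i ≤ j) : (E i).1 ≤ (E j).1 ∧ (E j).2 ≤ (E i).2 := by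
  rcases eq_or_lt_of_le h with rfl | h'
  · exact ⟨le_rfl, le_rfl⟩
  · have := hE.2 _ _ h'
    exact ⟨this.1.le, this.2.le⟩

lemma prepend {P : Finset Cell} {k : ℕ} {E : Fin (k+1) → Cell} (hE : IsDecSeq P (k+1) E)
    {X : Cell} (hX : X ∈ P) (hcol : X.1 < (E 0).1) (hrow : (E 0).2 < X.2) :
    ∃ D : Fin (k+2) → Cell, IsDecSeq P (k+2) D ∧ D 0 = X := by
  refine ⟨fun i => if i.1 = 0 then X else E ⟨i.1 - 1, by omega⟩, ⟨?_, ?_⟩, rfl⟩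
  · intro i; dsimp only; split
    · exact hX
    · exact hE.1 _
  · intro i j hij
    have hij' : i.1 < j.1 := hij
    have hj := j.2
    dsimp only
    rcases Nat.eq_zero_or_pos i.1 with h0 | h0
    · rw [if_pos h0, if_neg (by omega)]
      have hle : (E 0).1 ≤ (E ⟨j.1 - 1, by omega⟩).1 ∧ (E ⟨j.1 - 1, by omega⟩).2 ≤ (E 0).2 :=
        decseq_le hE (by simp [Fin.le_def])
      exact ⟨by omega, by omega⟩
    · rw [if_neg (by omega), if_neg (by omega)]
      exact hE.2 _ _ (by simp [Fin.lt_def]; omega)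

lemma replace_head {P : Finset Cell} {k : ℕ} {S : Fin (k+2) → Cell} (hS : IsDecSeq P (k+2) S)
    {Y : Cell} (hY : Y ∈ P) (hcol : Y.1 < (S 1).1) (hrow : (S 1).2 < Y.2) :
    ∃ E : Fin (k+2) → Cell, IsDecSeq P (k+2) E ∧ E 0 = Y := by
  refine ⟨fun i => if i.1 = 0 then Y else S i, ⟨?_, ?_⟩, rfl⟩
  · intro i; dsimp only; split
    · exact hY
    · exact hS.1 _
  · intro i j hij
    have hij' : i.1 < j.1 := hij
    dsimp only
    rcases Nat.eq_zero_or_pos i.1 with h0 | h0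
    · rw [if_pos h0, if_neg (by omega)]
      have h1j : (1 : Fin (k+2)) ≤ j := by simp [Fin.le_def]; omega
      have hle := decseq_le hS h1j
      exact ⟨by omega, by omega⟩
    · rw [if_neg (by omega), if_neg (by omega)]
      exact hS.2 i j hij

lemma aux_main (m n : ℕ) (P : Finset Cell) (hP : IsPlacement (Rect m n) P) :
    ∀ M k (S : Fin (k+1) → Cell) (X : Cell), IsDecSeq P (k+1) S → X ∈ P →
      (S 0).1 < X.1 → (S 0).2 < X.2 → kappa n P X < (S 0).1 →
      k * (n+1) + X.2 ≤ M + (S 0).2 →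
      ∃ D : Fin (k+2) → Cell, IsDecSeq P (k+2) D ∧ D 0 = X := by
  intro M
  induction M using Nat.strong_induction_on with
  | _ M ih =>
  intro k S X hS hX hcol hrow hkap hM
  have hXr := mem_rect hP hX
  have hS0P : S 0 ∈ P := hS.1 0
  have hS0r := mem_rect hP hS0P
  -- Step 1: a pivot in column (S 0).1 strictly below row X.2
  have hpiv : ∃ r₁, ((S 0).1, r₁) ∈ pivL n P ∧ r₁ < X.2 := by
    by_cases h3 : ∀ v ∈ pivLAux P (X.2 - 1), v.1 ≠ (S 0).1
    · exfalso
      have hc : pivCondL P (pivLAux P (X.2 - 1)) X.2 (S 0).1 :=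
        ⟨⟨X, hX, rfl, hcol⟩, ⟨S 0, hS0P, rfl, hrow⟩, h3⟩
      obtain ⟨c', hc', hle⟩ := pivot_placed P (by omega) hc
      have hmem : (c', X.2) ∈ pivL n P := pivLAux_mono P (by omega : X.2 ≤ n) hc'
      have := kappa_eq n P hmem
      omega
    · push_neg at h3
      obtain ⟨v, hv, hv1⟩ := h3
      have hvr := pivLAux_row_le P _ v hv
      refine ⟨v.2, ?_, by omega⟩
      have hvv : ((S 0).1, v.2) = v := by rw [← hv1]
      rw [hvv]
      exact pivLAux_mono P (by omega : X.2 - 1 ≤ n) hv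
  obtain ⟨r₁, hr₁mem, hr₁lt⟩ := hpiv
  -- Step 2: data from the pivot
  obtain ⟨⟨Y₁, hY₁P, hY₁r, hY₁c⟩, ⟨z, hzP, hzc, hzr⟩, -⟩ := pivot_cond n P hr₁mem
  have hY₁rect := mem_rect hP hY₁P
  have hz : z = S 0 := hP.2.1 z hzP (S 0) hS0P hzc
  have hρr₁ : (S 0).2 < r₁ := by rw [← hz]; exact hzr
  have hkapY : kappa n P Y₁ = (S 0).1 := kappa_eq n P (by rw [hY₁r]; exact hr₁mem)
  -- Step 3: a decreasing sequence E of length k+1 starting at Y₁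
  have hEx : ∃ E : Fin (k+1) → Cell, IsDecSeq P (k+1) E ∧ E 0 = Y₁ := by
    rcases Nat.eq_zero_or_pos k with hk0 | hk1
    · subst hk0
      refine ⟨fun _ => Y₁, ⟨fun _ => hY₁P, ?_⟩, rfl⟩
      intro i j hij
      have hij' : i.1 < j.1 := hij
      have := i.2; have := j.2
      omega
    · obtain ⟨k', rfl⟩ : ∃ k', k = k' + 1 := ⟨k - 1, by omega⟩
      have h01 : (0 : Fin (k'+2)) < 1 := by simp [Fin.lt_def]
      have hS1P : S 1 ∈ P := hS.1 1
      have hS1r := mem_rect hP hS1P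
      have h01' := hS.2 0 1 h01
      by_cases hcmp : Y₁.1 < (S 1).1
      · exact replace_head hS hY₁P hcmp (by rw [hY₁r]; omega)
      · -- (S 1).1 < Y₁.1
        have hne1 : (S 1).1 ≠ Y₁.1 := by
          intro h
          have heq := hP.2.1 (S 1) hS1P Y₁ hY₁P h
          have : (S 1).2 = Y₁.2 := by rw [heq]
          omega
        -- recurse at k'
        set T : Fin (k'+1) → Cell := fun i => S i.succ with hT
        have hTdec : IsDecSeq P (k'+1) T := by
          refine ⟨fun i => hS.1 _, fun i j hij => hS.2 _ _ ?_⟩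
          simp only [Fin.lt_def, Fin.val_succ]
          exact Nat.add_lt_add_right hij 1
        have hT0 : T 0 = S 1 := by simp [hT]
        have hmul : (k'+1) * (n+1) = k' * (n+1) + (n+1) := Nat.succ_mul _ _
        obtain ⟨D', hD', hD'0⟩ := ih (M-1) (by omega) k' T Y₁ hTdec hY₁P
          (by rw [hT0]; omega) (by rw [hT0, hY₁r]; omega)
          (by rw [hT0]; omega) (by rw [hT0, hY₁r]; omega)
        exact ⟨D', hD', hD'0⟩
  obtain ⟨E, hE, hE0⟩ := hEx
  -- Step 4: compare X.1 and Y₁.1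
  have hneXY : X.1 ≠ Y₁.1 := by
    intro h
    have heq := hP.2.1 X hX Y₁ hY₁P h
    have : X.2 = Y₁.2 := by rw [heq]
    omega
  rcases Nat.lt_or_ge X.1 Y₁.1 with hlt | hge
  · exact prepend hE hX (by rw [hE0]; exact hlt) (by rw [hE0, hY₁r]; exact hr₁lt)
  · exact ih (M-1) (by omega) k E X hE hX (by rw [hE0]; omega)
      (by rw [hE0, hY₁r]; exact hr₁lt) (by rw [hE0]; omega)
      (by rw [hE0, hY₁r]; omega)

/-- **Lemma.** Let `S` be a decreasing sequence of length `k` in `P` and `X ∈ P` with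
`S₁ X` a 12-pattern. If `κ(X) < col(S₁)`, then there exists a decreasing sequence of
length `k + 1` in `P` with first element `X`. -/
theorem lemma_pivot5 (m n : ℕ) (P : Finset Cell) (hP : IsPlacement (Rect m n) P)
    (k : ℕ) (hk : 0 < k) (S : Fin k → Cell) (hS : IsDecSeq P k S)
    (X : Cell) (hX : X ∈ P)
    (h12 : (S ⟨0, hk⟩).1 < X.1 ∧ (S ⟨0, hk⟩).2 < X.2)
    (hkap : kappa n P X < (S ⟨0, hk⟩).1) :
    ∃ D : Fin (k + 1) → Cell, IsDecSeq P (k + 1) D ∧ D ⟨0, by omega⟩ = X := by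
  obtain ⟨k', rfl⟩ : ∃ k', k = k' + 1 := ⟨k - 1, by omega⟩
  have h0 : (⟨0, hk⟩ : Fin (k' + 1)) = 0 := rfl
  rw [h0] at h12 hkap
  obtain ⟨D, hD, hD0⟩ := aux_main m n P hP (k' * (n+1) + X.2) k' S X hS hX h12.1 h12.2 hkap
    (by omega)
  exact ⟨D, hD, hD0⟩
end

section
/- Lemma: Let P be a rook placement on a rectangular Ferrers board, let a < b be columns, and let L be a longest decreasing sequence in P|_{a,b}, of length k. If column b contains no square of P and L ≠ D_{a,b}(P), then P(L→b)|_{a,b} contains a decreasing sequence of length k+1. If column a contains no square of P and L ≠ d_{a,b}(P), then P(a←L)|_{a,b} contains a decreasing sequence of length k+1. -/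
open scoped Classical

/-- The restriction `P|_{a,b}` of a placement to columns `a` through `b`. -/
def colRestrict (a b : ℕ) (P : Finset Cell) : Finset Cell :=
  P.filter fun p => a ≤ p.1 ∧ p.1 ≤ b

/-- The sequence obtained from `S = S₁…S_k` by the left shift towards column `a`:
`S_i` moves to the column of `S_{i-1}` for `i > 1`, and `S₁` moves to column `a`;
rows are unchanged. -/
def shiftLSeq (a : ℕ) (k : ℕ) (S : Fin k → Cell) : Fin k → Cell := fun i =>
  (if 0 < i.1 then (S ⟨i.1 - 1, Nat.lt_of_le_of_lt (Nat.sub_le _ _) i.isLt⟩).1 else a,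
    (S i).2)

/-- The sequence obtained from `S = S₁…S_k` by the right shift towards column `b`:
`S_i` moves to the column of `S_{i+1}` for `i < k`, and `S_k` moves to column `b`;
rows are unchanged. -/
def shiftRSeq (b : ℕ) (k : ℕ) (S : Fin k → Cell) : Fin k → Cell := fun i =>
  (if h : i.1 + 1 < k then (S ⟨i.1 + 1, h⟩).1 else b, (S i).2)

/-- The left shift `P(a ← S)` of the subplacement `S` of `P` to column `a`. -/
def leftShift (a : ℕ) (k : ℕ) (S : Fin k → Cell) (P : Finset Cell) : Finset Cell :=
  (P \ Finset.image S Finset.univ) ∪ Finset.image (shiftLSeq a k S) Finset.univ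

/-- The right shift `P(S → b)` of the subplacement `S` of `P` to column `b`. -/
def rightShift (b : ℕ) (k : ℕ) (S : Fin k → Cell) (P : Finset Cell) : Finset Cell :=
  (P \ Finset.image S Finset.univ) ∪ Finset.image (shiftRSeq b k S) Finset.univ

/-- `S` is a longest decreasing sequence in `P|_{a,b}`. -/
def IsMaxDec (a b : ℕ) (P : Finset Cell) (k : ℕ) (S : Fin k → Cell) : Prop :=
  IsDecSeq (colRestrict a b P) k S ∧
    ∀ (l : ℕ) (T : Fin l → Cell), IsDecSeq (colRestrict a b P) l T → l ≤ k

/-- `S = d_{a,b}(P)`: the lexicographically value-smallest longest decreasing sequence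
in `P|_{a,b}`. -/
def IsSmallestDec (a b : ℕ) (P : Finset Cell) (k : ℕ) (S : Fin k → Cell) : Prop :=
  IsMaxDec a b P k S ∧
    ∀ T : Fin k → Cell, IsDecSeq (colRestrict a b P) k T → rowLexLE k S T

/-- `S = D_{a,b}(P)`: the lexicographically value-largest longest decreasing sequence
in `P|_{a,b}`. -/
def IsLargestDec (a b : ℕ) (P : Finset Cell) (k : ℕ) (S : Fin k → Cell) : Prop :=
  IsMaxDec a b P k S ∧
    ∀ T : Fin k → Cell, IsDecSeq (colRestrict a b P) k T → rowLexLE k T S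

/-- `S` is a longest increasing sequence in `P|_{a,b}`. -/
def IsMaxInc (a b : ℕ) (P : Finset Cell) (k : ℕ) (S : Fin k → Cell) : Prop :=
  IsIncSeq (colRestrict a b P) k S ∧
    ∀ (l : ℕ) (T : Fin l → Cell), IsIncSeq (colRestrict a b P) l T → l ≤ k

/-- `S = i_{a,b}(P)`: the lexicographically value-smallest longest increasing sequence
in `P|_{a,b}`. -/
def IsSmallestInc (a b : ℕ) (P : Finset Cell) (k : ℕ) (S : Fin k → Cell) : Prop :=
  IsMaxInc a b P k S ∧
    ∀ T : Fin k → Cell, IsIncSeq (colRestrict a b P) k T → rowLexLE k S T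

/-- `S = I_{a,b}(P)`: the lexicographically value-largest longest increasing sequence
in `P|_{a,b}`. -/
def IsLargestInc (a b : ℕ) (P : Finset Cell) (k : ℕ) (S : Fin k → Cell) : Prop :=
  IsMaxInc a b P k S ∧
    ∀ T : Fin k → Cell, IsIncSeq (colRestrict a b P) k T → rowLexLE k T S

/-!
Suppose column `b` is empty and `L ≠ D_{a,b}(P)`, so some longest decreasing sequence `T` is
lexicographically larger than `L`, first differing at index `i`. Two longest decreasing
sequences never cross: if `A_s` lies strictly north-west of `B_s`, then `A₀ … A_s B_s … B_{k-1}`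
is longer. Hence from `i` on, `T_r` lies strictly north-east of `L_r` (so it is not a square of
`L` and survives the shift) for as long as `T_r` cannot be followed by the shifted square `L'_r`.
At the first index `w` where it can, `L'₀ … L'_{i-1} T_i … T_w L'_w … L'_{k-1}` has length
`k + 1`; such a `w` exists because `L'_{k-1}` sits in the empty column `b`. The left shift is
the mirror image, with `T` lexicographically smaller and lying south-west of `L`.
-/

open Finset

/-- `q` may follow `p` in a decreasing sequence. -/
def StrictlyNW (p q : Cell) : Prop := p.1 < q.1 ∧ q.2 < p.2

def StrictlySW (p q : Cell) : Prop := p.1 < q.1 ∧ p.2 < q.2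

theorem StrictlyNW.trans {p q r : Cell} (hpq : StrictlyNW p q) (hqr : StrictlyNW q r) :
    StrictlyNW p r :=
  ⟨hpq.1.trans hqr.1, hqr.2.trans hpq.2⟩

instance : IsTrans Cell StrictlyNW := ⟨fun _ _ _ => StrictlyNW.trans⟩

def IsDecChain {k : ℕ} (S : Fin k → Cell) : Prop := ∀ i j : Fin k, i < j → StrictlyNW (S i) (S j)

section Chains

variable {k : ℕ} {A B : Fin k → Cell}

theorem isDecChain_of_succ (h : ∀ i j : Fin k, (j : ℕ) = i + 1 → StrictlyNW (A i) (A j)) :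
    IsDecChain A := by
  cases k with
  | zero => exact fun i => i.elim0
  | succ n => exact (Fin.liftFun_iff_succ StrictlyNW).2 fun i => h _ _ (by simp)

def splice (A B : Fin k → Cell) (s : ℕ) (e : Fin k) : Cell := if (e : ℕ) < s then A e else B e

/-- `A₀ … A_s B_s … B_{k-1}`: a sequence of length `k + 1`. -/
def glue (A B : Fin k → Cell) (s : Fin k) (e : Fin (k + 1)) : Cell :=
  if h : (e : ℕ) ≤ s then A ⟨e, by omega⟩ else B ⟨e - 1, by omega⟩

theorem IsDecChain.splice (hA : IsDecChain A) (hB : IsDecChain B) {s : ℕ}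
    (hs : ∀ r t : Fin k, (r : ℕ) + 1 = s → (t : ℕ) = s → StrictlyNW (A r) (B t)) :
    IsDecChain (splice A B s) := by
  refine isDecChain_of_succ fun e e' he => ?_
  unfold _root_.splice
  split_ifs with h h' h'
  · exact hA e e' (by omega)
  · exact hs e e' (by omega) (by omega)
  · omega
  · exact hB e e' (by omega)

theorem IsDecChain.glue (hA : IsDecChain A) (hB : IsDecChain B) {s : Fin k}
    (hs : StrictlyNW (A s) (B s)) : IsDecChain (glue A B s) := by
  refine isDecChain_of_succ fun e e' he => ?_
  unfold _root_.glue
  split_ifs with h h'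
  · exact hA _ _ (Fin.mk_lt_mk.2 (by omega))
  · convert hs using 2 <;> exact Fin.ext (by simp only; omega)
  · omega
  · exact hB _ _ (Fin.mk_lt_mk.2 (by omega))

theorem glue_mem {Q : Finset Cell} {s : Fin k} (hA : ∀ r ≤ s, A r ∈ Q)
    (hB : ∀ r, s ≤ r → B r ∈ Q) (e : Fin (k + 1)) : glue A B s e ∈ Q := by
  unfold glue
  split_ifs with h
  · exact hA _ (Fin.mk_le_mk.2 h)
  · exact hB _ (Fin.le_def.2 (by simp only; omega))

end Chains

section Longest

variable {F Q : Finset Cell} {k : ℕ} {A B : Fin k → Cell}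

theorem not_strictlyNW_of_maximal (hmax : ∀ (l : ℕ) (S : Fin l → Cell), IsDecSeq Q l S → l ≤ k)
    (hA : IsDecSeq Q k A) (hB : IsDecSeq Q k B) (s : Fin k) : ¬ StrictlyNW (A s) (B s) :=
  fun h => Nat.not_succ_le_self k
    (hmax _ _ ⟨glue_mem (fun r _ => hA.1 r) (fun r _ => hB.1 r), IsDecChain.glue hA.2 hB.2 h⟩)

theorem strictlySW_of_fst_lt (hQ : IsPlacement F Q)
    (hmax : ∀ (l : ℕ) (S : Fin l → Cell), IsDecSeq Q l S → l ≤ k)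
    (hA : IsDecSeq Q k A) (hB : IsDecSeq Q k B) {s : Fin k} (h : (A s).1 < (B s).1) :
    StrictlySW (A s) (B s) := by
  refine ⟨h, ?_⟩
  rcases lt_trichotomy (A s).2 (B s).2 with hlt | heq | hgt
  · exact hlt
  · exact absurd (hQ.2.2 _ (hA.1 s) _ (hB.1 s) heq ▸ h) (lt_irrefl _)
  · exact absurd ⟨h, hgt⟩ (not_strictlyNW_of_maximal hmax hA hB s)

theorem strictlySW_of_snd_lt (hQ : IsPlacement F Q)
    (hmax : ∀ (l : ℕ) (S : Fin l → Cell), IsDecSeq Q l S → l ≤ k)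
    (hA : IsDecSeq Q k A) (hB : IsDecSeq Q k B) {s : Fin k} (h : (A s).2 < (B s).2) :
    StrictlySW (A s) (B s) := by
  refine ⟨?_, h⟩
  rcases lt_trichotomy (A s).1 (B s).1 with hlt | heq | hgt
  · exact hlt
  · exact absurd (hQ.2.1 _ (hA.1 s) _ (hB.1 s) heq ▸ h) (lt_irrefl _)
  · exact absurd ⟨hgt, h⟩ (not_strictlyNW_of_maximal hmax hB hA s)

end Longest

section Shifts

variable {F P : Finset Cell} {a b k : ℕ} {L : Fin k → Cell}

theorem IsPlacement.colRestrict (hP : IsPlacement F P) : IsPlacement F (colRestrict a b P) :=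
  ⟨(filter_subset _ _).trans hP.1,
    fun p hp q hq => hP.2.1 p (mem_of_mem_filter p hp) q (mem_of_mem_filter q hq),
    fun p hp q hq => hP.2.2 p (mem_of_mem_filter p hp) q (mem_of_mem_filter q hq)⟩

theorem mem_colRestrict {p : Cell} : p ∈ colRestrict a b P ↔ p ∈ P ∧ a ≤ p.1 ∧ p.1 ≤ b :=
  mem_filter

theorem fst_lt_of_mem_colRestrict (hb : ∀ p ∈ P, p.1 ≠ b) {p : Cell}
    (hp : p ∈ colRestrict a b P) : p.1 < b :=
  (mem_colRestrict.1 hp).2.2.lt_of_ne (hb p (mem_colRestrict.1 hp).1)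

theorem lt_fst_of_mem_colRestrict (ha : ∀ p ∈ P, p.1 ≠ a) {p : Cell}
    (hp : p ∈ colRestrict a b P) : a < p.1 :=
  (mem_colRestrict.1 hp).2.1.lt_of_ne (ha p (mem_colRestrict.1 hp).1).symm

theorem mem_colRestrict_sdiff_union {X Y : Finset Cell} {p : Cell} (hp : p ∈ colRestrict a b P)
    (hX : p ∉ X) : p ∈ colRestrict a b (P \ X ∪ Y) := by
  rw [mem_colRestrict] at hp ⊢
  exact ⟨mem_union_left _ (mem_sdiff.2 ⟨hp.1, hX⟩), hp.2⟩

theorem mem_colRestrict_union_right {X Y : Finset Cell} {q : Cell} (hq : q ∈ Y) (ha : a ≤ q.1)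
    (hb : q.1 ≤ b) : q ∈ colRestrict a b (P \ X ∪ Y) :=
  mem_colRestrict.2 ⟨mem_union_right _ hq, ha, hb⟩

theorem IsDecChain.not_mem_image (hL : IsDecChain L) {r : Fin k} {p : Cell}
    (h : StrictlySW (L r) p ∨ StrictlySW p (L r)) : p ∉ image L univ := by
  simp only [mem_image, mem_univ, true_and, not_exists]
  rintro j rfl
  unfold StrictlySW at h
  rcases lt_trichotomy j r with hjr | rfl | hrj
  · have := hL j r hjr
    unfold StrictlyNW at this
    omega
  · omega
  · have := hL r j hrj
    unfold StrictlyNW at this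
    omega

theorem shiftRSeq_fst_of_succ {r t : Fin k} (ht : (t : ℕ) = r + 1) :
    (shiftRSeq b k L r).1 = (L t).1 := by
  unfold shiftRSeq
  rw [dif_pos (ht ▸ t.isLt)]
  exact congrArg (fun t => (L t).1) (Fin.ext ht.symm)

theorem shiftRSeq_fst_of_last {r : Fin k} (hr : (r : ℕ) + 1 = k) :
    (shiftRSeq b k L r).1 = b :=
  dif_neg (by omega)

theorem shiftLSeq_fst_of_succ {r t : Fin k} (ht : (t : ℕ) = r + 1) :
    (shiftLSeq a k L t).1 = (L r).1 := by
  unfold shiftLSeq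
  rw [if_pos (by omega)]
  exact congrArg (fun t => (L t).1) (Fin.ext (by simp only; omega))

theorem shiftLSeq_fst_of_zero {r : Fin k} (hr : (r : ℕ) = 0) : (shiftLSeq a k L r).1 = a :=
  if_neg (by omega)

theorem le_of_mem_colRestrict {p : Cell} (hp : p ∈ colRestrict a b P) : a ≤ b :=
  (mem_colRestrict.1 hp).2.1.trans (mem_colRestrict.1 hp).2.2

theorem IsDecSeq.isDecSeq_shiftRSeq (hL : IsDecSeq (colRestrict a b P) k L)
    (hb : ∀ p ∈ P, p.1 ≠ b) :
    IsDecSeq (colRestrict a b (rightShift b k L P)) k (shiftRSeq b k L) := by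
  have hcol : ∀ r, a ≤ (shiftRSeq b k L r).1 ∧ (shiftRSeq b k L r).1 ≤ b := by
    intro r
    by_cases h : (r : ℕ) + 1 < k
    · rw [shiftRSeq_fst_of_succ (t := ⟨r + 1, h⟩) rfl]
      exact (mem_colRestrict.1 (hL.1 _)).2
    · rw [shiftRSeq_fst_of_last (by omega)]
      exact ⟨le_of_mem_colRestrict (hL.1 r), le_rfl⟩
  refine ⟨fun r => mem_colRestrict_union_right (mem_image_of_mem _ (mem_univ r)) (hcol r).1
    (hcol r).2, isDecChain_of_succ fun r t ht => ⟨?_, (hL.2 r t (by omega)).2⟩⟩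
  rw [shiftRSeq_fst_of_succ ht]
  by_cases h : (t : ℕ) + 1 < k
  · rw [shiftRSeq_fst_of_succ (t := ⟨t + 1, h⟩) rfl]
    exact (hL.2 _ _ (Fin.lt_def.2 (by simp))).1
  · rw [shiftRSeq_fst_of_last (by omega)]
    exact fst_lt_of_mem_colRestrict hb (hL.1 t)

theorem IsDecSeq.isDecSeq_shiftLSeq (hL : IsDecSeq (colRestrict a b P) k L)
    (ha : ∀ p ∈ P, p.1 ≠ a) :
    IsDecSeq (colRestrict a b (leftShift a k L P)) k (shiftLSeq a k L) := by
  have hcol : ∀ r, a ≤ (shiftLSeq a k L r).1 ∧ (shiftLSeq a k L r).1 ≤ b := by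
    intro r
    rcases Nat.eq_zero_or_pos r with h | h
    · rw [shiftLSeq_fst_of_zero h]
      exact ⟨le_rfl, le_of_mem_colRestrict (hL.1 r)⟩
    · rw [shiftLSeq_fst_of_succ (r := ⟨r - 1, by omega⟩) (by simp only; omega)]
      exact (mem_colRestrict.1 (hL.1 _)).2
  refine ⟨fun r => mem_colRestrict_union_right (mem_image_of_mem _ (mem_univ r)) (hcol r).1
    (hcol r).2, isDecChain_of_succ fun r t ht => ⟨?_, (hL.2 r t (by omega)).2⟩⟩
  rw [shiftLSeq_fst_of_succ ht]
  rcases Nat.eq_zero_or_pos r with h | h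
  · rw [shiftLSeq_fst_of_zero h]
    exact lt_fst_of_mem_colRestrict ha (hL.1 r)
  · rw [shiftLSeq_fst_of_succ (r := ⟨r - 1, by omega⟩) (by simp only; omega)]
    exact (hL.2 _ _ (Fin.lt_def.2 (by simp only; omega))).1

end Shifts

theorem exists_lt_of_not_rowLexLE {k : ℕ} {S T : Fin k → Cell} (h : ¬ rowLexLE k S T) :
    ∃ i, (T i).2 < (S i).2 ∧ ∀ j < i, (T j).2 = (S j).2 := by
  have hlex : ¬ toLex (fun i => (S i).2) ≤ toLex (fun i => (T i).2) := by
    intro hle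
    rcases hle.eq_or_lt with heq | ⟨i, hpre, hlt⟩
    · exact h (Or.inl fun i => congrFun heq i)
    · exact h (Or.inr ⟨i, hlt, hpre⟩)
  obtain ⟨i, hpre, hlt⟩ := lt_of_not_ge hlex
  exact ⟨i, hlt, hpre⟩

section RightShift

variable {F P : Finset Cell} {a b k : ℕ} {L T : Fin k → Cell}

/-- The witness is `L'₀ … L'_{i-1} T_i … T_w L'_w … L'_{k-1}`, with `L'` the right shift of `L`. -/
theorem exists_decSeq_rightShift_of_strictlySW (hb : ∀ p ∈ P, p.1 ≠ b)
    (hL : IsDecSeq (colRestrict a b P) k L) (hT : IsDecSeq (colRestrict a b P) k T)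
    {i w : Fin k} (hiw : i ≤ w) (hjunction : ∀ j : Fin k, (j : ℕ) + 1 = i → (T i).2 < (L j).2)
    (hSW : ∀ r, i ≤ r → r ≤ w → StrictlySW (L r) (T r))
    (hw : (T w).1 < (shiftRSeq b k L w).1) :
    ∃ E : Fin (k + 1) → Cell, IsDecSeq (colRestrict a b (rightShift b k L P)) (k + 1) E := by
  have hL' := hL.isDecSeq_shiftRSeq hb
  have hsplice_w : splice (shiftRSeq b k L) T i w = T w := if_neg (not_lt.2 hiw)
  refine ⟨glue (splice (shiftRSeq b k L) T i) (shiftRSeq b k L) w,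
    glue_mem (fun r hr => ?_) (fun r _ => hL'.1 r),
    IsDecChain.glue (IsDecChain.splice hL'.2 hT.2 fun r t hr ht => ?_) hL'.2 ?_⟩
  · unfold splice
    split_ifs with hri
    · exact hL'.1 r
    · exact mem_colRestrict_sdiff_union (hT.1 r)
        (IsDecChain.not_mem_image hL.2 (Or.inl (hSW r (not_lt.1 hri) hr)))
  · obtain rfl : t = i := Fin.ext ht
    refine ⟨?_, hjunction r hr⟩
    rw [shiftRSeq_fst_of_succ hr.symm]
    exact (hSW t le_rfl hiw).1
  · rw [hsplice_w]
    exact ⟨hw, (hSW w hiw le_rfl).2⟩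

theorem exists_decSeq_rightShift_of_not_rowLexLE (hP : IsPlacement F P) (hb : ∀ p ∈ P, p.1 ≠ b)
    (hL : IsMaxDec a b P k L) (hT : IsDecSeq (colRestrict a b P) k T) (hTL : ¬ rowLexLE k T L) :
    ∃ E : Fin (k + 1) → Cell, IsDecSeq (colRestrict a b (rightShift b k L P)) (k + 1) E := by
  obtain ⟨i, hi, hpre⟩ := exists_lt_of_not_rowLexLE hTL
  have hk := i.pos
  by_contra hE
  have hjunction : ∀ j : Fin k, (j : ℕ) + 1 = i → (T i).2 < (L j).2 := fun j hj =>
    hpre j (by omega) ▸ (hT.2 j i (by omega)).2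
  have hSW : ∀ d : ℕ, ∀ r : Fin k, i ≤ r → (r : ℕ) ≤ i + d → StrictlySW (L r) (T r) := by
    intro d
    induction d with
    | zero =>
      intro r hir hr
      obtain rfl : r = i := le_antisymm (Fin.le_def.2 (by omega)) hir
      exact strictlySW_of_snd_lt hP.colRestrict hL.2 hL.1 hT hi
    | succ d ih =>
      intro r hir hr
      rcases Nat.lt_or_ge (r : ℕ) (i + d + 1) with hr' | hr'
      · exact ih r hir (by omega)
      obtain ⟨w, hw⟩ : ∃ w : Fin k, (w : ℕ) = i + d := ⟨⟨i + d, by omega⟩, rfl⟩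
      have hcol : (shiftRSeq b k L w).1 ≤ (T w).1 := not_lt.1 fun hcol =>
        hE (exists_decSeq_rightShift_of_strictlySW hb hL.1 hT (by omega) hjunction
          (fun s his hsw => ih s his (by omega)) hcol)
      rw [shiftRSeq_fst_of_succ (t := r) (by omega)] at hcol
      exact strictlySW_of_fst_lt hP.colRestrict hL.2 hL.1 hT
        (hcol.trans_lt (hT.2 w r (by omega)).1)
  obtain ⟨w, hw⟩ : ∃ w : Fin k, (w : ℕ) = k - 1 := ⟨⟨k - 1, by omega⟩, rfl⟩
  refine hE (exists_decSeq_rightShift_of_strictlySW hb hL.1 hT (w := w) (by omega) hjunction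
    (fun r hir _ => hSW k r hir (by omega)) ?_)
  rw [shiftRSeq_fst_of_last (by omega)]
  exact fst_lt_of_mem_colRestrict hb (hT.1 w)

end RightShift

section LeftShift

variable {F P : Finset Cell} {a b k : ℕ} {L T : Fin k → Cell}

/-- The witness is `L'₀ … L'_i T_i … T_w L'_{w+1} … L'_{k-1}`, with `L'` the left shift of `L`. -/
theorem exists_decSeq_leftShift_of_strictlySW (ha : ∀ p ∈ P, p.1 ≠ a)
    (hL : IsDecSeq (colRestrict a b P) k L) (hT : IsDecSeq (colRestrict a b P) k T)
    {i w : Fin k} (hiw : i ≤ w) (hjunction : (shiftLSeq a k L i).1 < (T i).1)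
    (hSW : ∀ r, i ≤ r → r ≤ w → StrictlySW (T r) (L r))
    (hw : ∀ t : Fin k, (t : ℕ) = w + 1 → (L t).2 < (T w).2) :
    ∃ E : Fin (k + 1) → Cell, IsDecSeq (colRestrict a b (leftShift a k L P)) (k + 1) E := by
  have hL' := hL.isDecSeq_shiftLSeq ha
  have hsplice_i : splice T (shiftLSeq a k L) (w + 1) i = T i := if_pos (by omega)
  refine ⟨glue (shiftLSeq a k L) (splice T (shiftLSeq a k L) (w + 1)) i,
    glue_mem (fun r _ => hL'.1 r) (fun r hr => ?_),
    IsDecChain.glue hL'.2 (IsDecChain.splice hT.2 hL'.2 fun r t hr ht => ?_) ?_⟩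
  · unfold splice
    split_ifs with hrw
    · exact mem_colRestrict_sdiff_union (hT.1 r)
        (IsDecChain.not_mem_image hL.2 (Or.inr (hSW r hr (by omega))))
    · exact hL'.1 r
  · obtain rfl : r = w := Fin.ext (by omega)
    refine ⟨?_, hw t ht⟩
    rw [shiftLSeq_fst_of_succ ht]
    exact (hSW r hiw le_rfl).1
  · rw [hsplice_i]
    exact ⟨hjunction, (hSW i le_rfl hiw).2⟩

theorem exists_decSeq_leftShift_of_not_rowLexLE (hP : IsPlacement F P) (ha : ∀ p ∈ P, p.1 ≠ a)
    (hL : IsMaxDec a b P k L) (hT : IsDecSeq (colRestrict a b P) k T) (hTL : ¬ rowLexLE k L T) :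
    ∃ E : Fin (k + 1) → Cell, IsDecSeq (colRestrict a b (leftShift a k L P)) (k + 1) E := by
  obtain ⟨i, hi, hpre⟩ := exists_lt_of_not_rowLexLE hTL
  have hk := i.pos
  by_contra hE
  have hjunction : (shiftLSeq a k L i).1 < (T i).1 := by
    rcases Nat.eq_zero_or_pos (i : ℕ) with h | h
    · rw [shiftLSeq_fst_of_zero h]
      exact lt_fst_of_mem_colRestrict ha (hT.1 i)
    · obtain ⟨j, hj⟩ : ∃ j : Fin k, (i : ℕ) = j + 1 := ⟨⟨i - 1, by omega⟩, by simp only; omega⟩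
      rw [shiftLSeq_fst_of_succ hj,
        ← hP.colRestrict.2.2 _ (hT.1 j) _ (hL.1.1 j) (hpre j (by omega))]
      exact (hT.2 j i (by omega)).1
  have hSW : ∀ d : ℕ, ∀ r : Fin k, i ≤ r → (r : ℕ) ≤ i + d → StrictlySW (T r) (L r) := by
    intro d
    induction d with
    | zero =>
      intro r hir hr
      obtain rfl : r = i := le_antisymm (Fin.le_def.2 (by omega)) hir
      exact strictlySW_of_snd_lt hP.colRestrict hL.2 hT hL.1 hi
    | succ d ih =>
      intro r hir hr
      rcases Nat.lt_or_ge (r : ℕ) (i + d + 1) with hr' | hr'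
      · exact ih r hir (by omega)
      obtain ⟨w, hw⟩ : ∃ w : Fin k, (w : ℕ) = i + d := ⟨⟨i + d, by omega⟩, rfl⟩
      have hrow : (T w).2 ≤ (L r).2 := not_lt.1 fun hrow =>
        hE (exists_decSeq_leftShift_of_strictlySW ha hL.1 hT (w := w) (by omega) hjunction
          (fun s his hsw => ih s his (by omega))
          fun t ht => (Fin.ext (by omega) : r = t) ▸ hrow)
      exact strictlySW_of_snd_lt hP.colRestrict hL.2 hT hL.1
        ((hT.2 w r (by omega)).2.trans_le hrow)
  obtain ⟨w, hw⟩ : ∃ w : Fin k, (w : ℕ) = k - 1 := ⟨⟨k - 1, by omega⟩, rfl⟩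
  exact hE (exists_decSeq_leftShift_of_strictlySW ha hL.1 hT (w := w) (by omega) hjunction
    (fun r hir _ => hSW k r hir (by omega)) fun t ht => by omega)

end LeftShift

theorem shift_nonextremal_general (m n : ℕ) (P : Finset Cell) (hP : IsPlacement (Rect m n) P)
    (a b : ℕ) (k : ℕ) (L : Fin k → Cell) (hL : IsMaxDec a b P k L) :
    (((∀ p ∈ P, p.1 ≠ b) ∧ ∀ D : Fin k → Cell, IsLargestDec a b P k D → L ≠ D) →
      ∃ E : Fin (k + 1) → Cell,
        IsDecSeq (colRestrict a b (rightShift b k L P)) (k + 1) E) ∧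
    (((∀ p ∈ P, p.1 ≠ a) ∧ ∀ d : Fin k → Cell, IsSmallestDec a b P k d → L ≠ d) →
      ∃ E : Fin (k + 1) → Cell,
        IsDecSeq (colRestrict a b (leftShift a k L P)) (k + 1) E) := by
  refine ⟨fun ⟨hb, hne⟩ => ?_, fun ⟨ha, hne⟩ => ?_⟩
  · obtain ⟨T, hT, hTL⟩ : ∃ T, IsDecSeq (colRestrict a b P) k T ∧ ¬ rowLexLE k T L := by
      by_contra! h
      exact hne L ⟨hL, h⟩ rfl
    exact exists_decSeq_rightShift_of_not_rowLexLE hP hb hL hT hTL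
  · obtain ⟨T, hT, hTL⟩ : ∃ T, IsDecSeq (colRestrict a b P) k T ∧ ¬ rowLexLE k L T := by
      by_contra! h
      exact hne L ⟨hL, h⟩ rfl
    exact exists_decSeq_leftShift_of_not_rowLexLE hP ha hL hT hTL

/-- **Lemma.** Let `L` be a longest decreasing sequence, of length `k`, in `P|_{a,b}`.
If column `b` contains no cell of `P` and `L ≠ D_{a,b}(P)`, then `P(L → b)|_{a,b}`
contains a decreasing sequence of length `k + 1`; if column `a` contains no cell of `P`
and `L ≠ d_{a,b}(P)`, then `P(a ← L)|_{a,b}` contains a decreasing sequence of length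
`k + 1`. -/
theorem shift_nonextremal (m n : ℕ) (P : Finset Cell) (hP : IsPlacement (Rect m n) P)
    (a b : ℕ) (ha1 : 1 ≤ a) (hab : a < b) (hbm : b ≤ m)
    (k : ℕ) (L : Fin k → Cell) (hL : IsMaxDec a b P k L) :
    (((∀ p ∈ P, p.1 ≠ b) ∧ ∀ D : Fin k → Cell, IsLargestDec a b P k D → L ≠ D) →
      ∃ E : Fin (k + 1) → Cell,
        IsDecSeq (colRestrict a b (rightShift b k L P)) (k + 1) E) ∧
    (((∀ p ∈ P, p.1 ≠ a) ∧ ∀ d : Fin k → Cell, IsSmallestDec a b P k d → L ≠ d) →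
      ∃ E : Fin (k + 1) → Cell,
        IsDecSeq (colRestrict a b (leftShift a k L P)) (k + 1) E) :=
  shift_nonextremal_general m n P hP a b k L hL
end
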